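/- Let n ≥ 1 and τ ≥ 0. Then Ω_n(τ) ⊆ Ω(τ): if ω ∈ ℝⁿ and C > 0 satisfy ‖Tω‖_ℤ ≥ C·T^{-(1+τ)/n} for every positive integer T, then ω ∉ ℚⁿ and the periods of ω satisfy T_{i+1}(ω) ≤ C^{-n}·T_i(ω)^{1+τ} for every i ∈ ℕ. -/

import Mathlib

/-!
Minkowski's convex body theorem applied to `{(T, k) : |T| ≤ Q ^ n, |T ω_j - k_j| ≤ Q⁻¹}`, a
convex symmetric body of volume `2 ^ (n + 1)`, gives Dirichlet's theorem: for every `Q > 1` some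
`1 ≤ T ≤ Q ^ n` has `‖T ω‖_ℤ ≤ Q⁻¹`. If `p` is a period and `d = ‖p ω‖_ℤ ≥ C p ^ (-(1 + τ) / n)`,
taking `Q` just above `d⁻¹` produces `T ≤ d ^ (-n) ≤ C ^ (-n) p ^ (1 + τ)` with `‖T ω‖_ℤ < d`,
and the next period is at most this `T`. A rational `ω` is excluded since `‖T ω‖_ℤ = 0` for a
common denominator `T`.
-/

open Finset

/-- Sup norm on `ℝⁿ`. -/
noncomputable def supNorm {n : ℕ} (x : Fin n → ℝ) : ℝ := ⨆ i, |x i|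

/-- Sup-norm distance from `x ∈ ℝⁿ` to the lattice `ℤⁿ`. -/
noncomputable def distZ {n : ℕ} (x : Fin n → ℝ) : ℝ :=
  sInf {r : ℝ | ∃ k : Fin n → ℤ, r = supNorm (fun i => x i - k i)}

/-- Distance from a real number to `ℤ`. -/
noncomputable def distZ1 (t : ℝ) : ℝ := sInf {r : ℝ | ∃ m : ℤ, r = |t - m|}

/-- `ω ∈ ℚⁿ`. -/
def IsRationalVec {n : ℕ} (ω : Fin n → ℝ) : Prop := ∀ i, ∃ q : ℚ, (q : ℝ) = ω i

/-- `ω` is resonant: some nonzero integer vector `k` has `⟨k, ω⟩ ∈ ℤ`. -/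
def Resonant {n : ℕ} (ω : Fin n → ℝ) : Prop :=
  ∃ k : Fin n → ℤ, k ≠ 0 ∧ ∃ m : ℤ, ∑ i, (k i : ℝ) * ω i = (m : ℝ)

/-- The sequence of periods of `ω`. -/
noncomputable def periods {n : ℕ} (ω : Fin n → ℝ) : ℕ → ℕ
  | 0 => 1
  | i + 1 => sInf {T : ℕ | 1 ≤ T ∧
      distZ (fun j => (T : ℝ) * ω j) < distZ (fun j => (periods ω i : ℝ) * ω j)}

/-- The resonance module of `ω`, as a subgroup of `ℤⁿ`. -/
def resModule {n : ℕ} (ω : Fin n → ℝ) : AddSubgroup (Fin n → ℤ) where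
  carrier := {k | ∃ m : ℤ, ∑ i, (k i : ℝ) * ω i = (m : ℝ)}
  zero_mem' := ⟨0, by simp⟩
  add_mem' := by
    rintro a b ⟨ma, ha⟩ ⟨mb, hb⟩
    refine ⟨ma + mb, ?_⟩
    push_cast
    simp only [Pi.add_apply, Int.cast_add, add_mul, Finset.sum_add_distrib, ha, hb]
  neg_mem' := by
    rintro a ⟨m, hm⟩
    refine ⟨-m, ?_⟩
    push_cast
    simp [neg_mul, Finset.sum_neg_distrib, hm]

open MeasureTheory

theorem exists_intCast_ne_zero_mem {ι : Type*} [Fintype ι] [Nonempty ι] {s : Set (ι → ℝ)}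
    (h_symm : ∀ x ∈ s, -x ∈ s) (h_conv : Convex ℝ s) (h_cpt : IsCompact s)
    (h_vol : 2 ^ Fintype.card ι ≤ volume s) :
    ∃ z : ι → ℤ, z ≠ 0 ∧ (fun i => (z i : ℝ)) ∈ s := by
  let b := Pi.basisFun ℝ ι
  have fund := ZSpan.isAddFundamentalDomain' b volume
  have : Countable (Submodule.span ℤ (Set.range b)).toAddSubgroup :=
    inferInstanceAs (Countable (Submodule.span ℤ (Set.range b)))
  have : DiscreteTopology (Submodule.span ℤ (Set.range b)).toAddSubgroup :=
    ZSpan.discreteTopology_pi_basisFun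
  have h_covol : volume (ZSpan.fundamentalDomain b) = 1 := by
    simp [b, ZSpan.fundamentalDomain_pi_basisFun, volume_pi_pi, Real.volume_Ico]
  obtain ⟨⟨x, hx⟩, hx0, hxs⟩ := exists_ne_zero_mem_lattice_of_measure_mul_two_pow_le_measure
    fund h_symm h_conv h_cpt (by simpa [h_covol] using h_vol)
  choose z hz using (b.mem_span_iff_repr_mem ℤ x).mp hx
  have hxz : x = fun i => (z i : ℝ) := funext fun i => (hz i).symm
  refine ⟨z, fun h => hx0 ?_, hxz ▸ hxs⟩
  ext i
  simp [hxz, h]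

lemma abs_det_eq_one_of_involutive {E : Type*} [AddCommGroup E] [Module ℝ E] {f : E →ₗ[ℝ] E}
    (hf : Function.Involutive f) : |LinearMap.det f| = 1 := by
  have hff : f ∘ₗ f = LinearMap.id := LinearMap.ext hf
  have h : LinearMap.det f * LinearMap.det f = 1 := by
    rw [← LinearMap.det_comp, hff, LinearMap.det_id]
  rcases mul_self_eq_one_iff.mp h with h | h <;> simp [h]

lemma addHaar_preimage_of_involutive {E : Type*} [NormedAddCommGroup E] [NormedSpace ℝ E]
    [MeasurableSpace E] [BorelSpace E] [FiniteDimensional ℝ E] (μ : Measure E)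
    [μ.IsAddHaarMeasure] {f : E →ₗ[ℝ] E} (hf : Function.Involutive f) (s : Set E) :
    μ (f ⁻¹' s) = μ s := by
  rw [← Set.image_eq_preimage_of_inverse hf.leftInverse hf.rightInverse,
    μ.addHaar_image_linearMap, abs_det_eq_one_of_involutive hf, ENNReal.ofReal_one, one_mul]

section distZ

variable {n : ℕ}

lemma supNorm_nonneg (x : Fin n → ℝ) : 0 ≤ supNorm x :=
  Real.iSup_nonneg fun i => abs_nonneg (x i)

lemma supNorm_le {x : Fin n → ℝ} {r : ℝ} (hr : 0 ≤ r) (h : ∀ i, |x i| ≤ r) :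
    supNorm x ≤ r :=
  Real.iSup_le h hr

lemma distZ_nonneg (x : Fin n → ℝ) : 0 ≤ distZ x :=
  le_csInf ⟨_, 0, rfl⟩ (by rintro r ⟨k, rfl⟩; exact supNorm_nonneg _)

lemma distZ_le_supNorm_sub (x : Fin n → ℝ) (k : Fin n → ℤ) :
    distZ x ≤ supNorm (fun i => x i - k i) :=
  csInf_le ⟨0, by rintro r ⟨k', rfl⟩; exact supNorm_nonneg _⟩ ⟨k, rfl⟩

lemma distZ_le_of_abs_sub_le {x : Fin n → ℝ} {r : ℝ} (k : Fin n → ℤ) (hr : 0 ≤ r)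
    (h : ∀ i, |x i - k i| ≤ r) : distZ x ≤ r :=
  (distZ_le_supNorm_sub x k).trans (supNorm_le hr h)

lemma distZ_le_half (x : Fin n → ℝ) : distZ x ≤ 1 / 2 :=
  distZ_le_of_abs_sub_le (fun i => round (x i)) (by norm_num) fun i => abs_sub_round (x i)

lemma distZ_intCast (k : Fin n → ℤ) : distZ (fun i => (k i : ℝ)) = 0 :=
  le_antisymm (distZ_le_of_abs_sub_le k le_rfl fun i => by simp) (distZ_nonneg _)

lemma IsRationalVec.exists_distZ_mul_eq_zero {ω : Fin n → ℝ} (hω : IsRationalVec ω) :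
    ∃ T : ℕ, 1 ≤ T ∧ distZ (fun j => (T : ℝ) * ω j) = 0 := by
  choose q hq using hω
  set T := ∏ i, (q i).den
  have hT : 1 ≤ T :=
    Nat.one_le_iff_ne_zero.mpr <| prod_ne_zero_iff.mpr fun i _ => (q i).den_ne_zero
  have hint : ∀ j, ∃ k : ℤ, (T : ℝ) * ω j = k := by
    intro j
    obtain ⟨c, hc⟩ := dvd_prod_of_mem (fun i => (q i).den) (mem_univ j)
    have hnum : ((q j).den : ℝ) * q j = (q j).num := by exact_mod_cast (q j).den_mul_eq_num
    refine ⟨c * (q j).num, ?_⟩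
    rw [← hq j, show T = (q j).den * c from hc]
    push_cast
    linear_combination (c : ℝ) * hnum
  choose k hk using hint
  exact ⟨T, hT, by rw [funext hk, distZ_intCast]⟩

end distZ

section Dirichlet

variable {n : ℕ}

def shear (ω : Fin n → ℝ) : (Fin (n + 1) → ℝ) →ₗ[ℝ] Fin (n + 1) → ℝ where
  toFun v := Fin.cons (v 0) fun j => ω j * v 0 - v j.succ
  map_add' u v := by ext i; cases i using Fin.cases <;> simp; ring
  map_smul' c v := by ext i; cases i using Fin.cases <;> simp; ring

lemma shear_involutive (ω : Fin n → ℝ) : Function.Involutive (shear ω) := by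
  intro v; ext i; cases i using Fin.cases <;> simp [shear]

def dirichletBody (ω : Fin n → ℝ) (Q : ℝ) : Set (Fin (n + 1) → ℝ) :=
  shear ω ⁻¹' Set.univ.pi (Fin.cons (Set.Icc (-Q ^ n) (Q ^ n)) fun _ => Set.Icc (-Q⁻¹) Q⁻¹ :
    Fin (n + 1) → Set ℝ)

lemma mem_dirichletBody {ω : Fin n → ℝ} {Q : ℝ} {v : Fin (n + 1) → ℝ} :
    v ∈ dirichletBody ω Q ↔ |v 0| ≤ Q ^ n ∧ ∀ j, |ω j * v 0 - v j.succ| ≤ Q⁻¹ := by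
  simp [dirichletBody, Fin.forall_fin_succ, abs_le, shear]

lemma neg_mem_dirichletBody {ω : Fin n → ℝ} {Q : ℝ} {v : Fin (n + 1) → ℝ}
    (hv : v ∈ dirichletBody ω Q) : -v ∈ dirichletBody ω Q := by
  simp only [mem_dirichletBody, Pi.neg_apply, abs_neg] at hv ⊢
  simpa [neg_add_eq_sub, abs_sub_comm] using hv

lemma convex_dirichletBody (ω : Fin n → ℝ) (Q : ℝ) : Convex ℝ (dirichletBody ω Q) :=
  (convex_pi fun i _ => i.cases (convex_Icc _ _) fun _ => convex_Icc _ _).linear_preimage _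

lemma isCompact_dirichletBody (ω : Fin n → ℝ) (Q : ℝ) : IsCompact (dirichletBody ω Q) := by
  rw [dirichletBody, ← Set.image_eq_preimage_of_inverse (shear_involutive ω).leftInverse
    (shear_involutive ω).rightInverse]
  exact (isCompact_univ_pi fun i => i.cases isCompact_Icc fun _ => isCompact_Icc).image
    (shear ω).continuous_of_finiteDimensional

lemma volume_dirichletBody (ω : Fin n → ℝ) {Q : ℝ} (hQ : 0 < Q) :
    volume (dirichletBody ω Q) = 2 ^ (n + 1) := by
  rw [dirichletBody, addHaar_preimage_of_involutive _ (shear_involutive ω), volume_pi_pi]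
  simp only [Fin.prod_univ_succ, Fin.cons_zero, Fin.cons_succ, Real.volume_Icc, prod_const,
    card_univ, Fintype.card_fin, sub_neg_eq_add]
  have h : (Q ^ n + Q ^ n) * (Q⁻¹ + Q⁻¹) ^ n = 2 ^ (n + 1) := by
    rw [← two_mul, ← two_mul, mul_pow, inv_pow]
    field_simp
    ring
  rw [← ENNReal.ofReal_pow (by positivity), ← ENNReal.ofReal_mul (by positivity), h,
    ENNReal.ofReal_pow zero_le_two, ENNReal.ofReal_ofNat]

theorem exists_distZ_le_inv (ω : Fin n → ℝ) {Q : ℝ} (hQ : 1 < Q) :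
    ∃ T : ℕ, 1 ≤ T ∧ (T : ℝ) ≤ Q ^ n ∧
      distZ (fun j => (T : ℝ) * ω j) ≤ Q⁻¹ := by
  have hQ0 : 0 < Q := one_pos.trans hQ
  obtain ⟨z, hz, hmem⟩ := exists_intCast_ne_zero_mem (fun _ => neg_mem_dirichletBody)
    (convex_dirichletBody ω Q) (isCompact_dirichletBody ω Q)
    (by rw [volume_dirichletBody ω hQ0, Fintype.card_fin])
  obtain ⟨h0, hsucc⟩ := mem_dirichletBody.mp hmem
  have hz0 : z 0 ≠ 0 := by
    intro hz0
    refine hz (funext fun i => i.cases hz0 fun j => ?_)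
    have hj : |(z j.succ : ℝ)| < 1 := by
      simpa [hz0] using (hsucc j).trans_lt (inv_lt_one_of_one_lt₀ hQ)
    exact_mod_cast Int.abs_lt_one_iff.mp (by exact_mod_cast hj)
  obtain ⟨k, hk⟩ :
      ∃ k : Fin n → ℤ, ∀ j, |((z 0).natAbs : ℝ) * ω j - k j| ≤ Q⁻¹ := by
    simp only [Nat.cast_natAbs, Int.cast_abs]
    rcases abs_choice (z 0 : ℝ) with h | h <;> rw [h]
    · exact ⟨fun j => z j.succ, fun j => by rw [mul_comm]; exact hsucc j⟩
    · refine ⟨fun j => -z j.succ, fun j => ?_⟩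
      rw [← abs_neg]
      convert hsucc j using 2
      push_cast
      ring
  refine ⟨(z 0).natAbs, Int.natAbs_pos.mpr hz0, ?_,
    distZ_le_of_abs_sub_le k (by positivity) hk⟩
  rwa [Nat.cast_natAbs, Int.cast_abs]

theorem exists_distZ_lt (hn : n ≠ 0) (ω : Fin n → ℝ) {d R : ℝ} (hd : 0 < d)
    (hd1 : d ≤ 1) (hR : d⁻¹ ^ n ≤ R) :
    ∃ T : ℕ, 1 ≤ T ∧ (T : ℝ) ≤ R ∧ distZ (fun j => (T : ℝ) * ω j) < d := by
  -- the integrality of `T` leaves room to pick `Q > d⁻¹` with `Q ^ n < ⌊R⌋₊ + 1`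
  obtain ⟨G, hdG, hGR⟩ := exists_between (hR.trans_lt (Nat.lt_floor_add_one R))
  have hG : 0 < G := (pow_pos (inv_pos.mpr hd) n).trans hdG
  set Q := G ^ ((n : ℝ)⁻¹)
  have hQn : Q ^ n = G := Real.rpow_inv_natCast_pow hG.le hn
  have hdQ : d⁻¹ < Q := lt_of_pow_lt_pow_left₀ n (by positivity) (hQn ▸ hdG)
  obtain ⟨T, hT, hTQ, hTd⟩ :=
    exists_distZ_le_inv ω ((one_le_inv₀ hd).mpr hd1 |>.trans_lt hdQ)
  refine ⟨T, hT, ?_, hTd.trans_lt (inv_lt_of_inv_lt₀ hd hdQ)⟩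
  have hTR : T < ⌊R⌋₊ + 1 := by exact_mod_cast (hTQ.trans_eq hQn).trans_lt hGR
  calc (T : ℝ) ≤ ⌊R⌋₊ := by exact_mod_cast Nat.lt_succ_iff.mp hTR
    _ ≤ R := Nat.floor_le ((pow_nonneg (inv_nonneg.mpr hd.le) n).trans hR)

end Dirichlet

lemma periods_succ_le {n : ℕ} {ω : Fin n → ℝ} {i T : ℕ} (hT : 1 ≤ T)
    (h : distZ (fun j => (T : ℝ) * ω j) < distZ (fun j => (periods ω i : ℝ) * ω j)) :
    1 ≤ periods ω (i + 1) ∧ periods ω (i + 1) ≤ T := by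
  have hne : {T' : ℕ | 1 ≤ T' ∧ distZ (fun j => (T' : ℝ) * ω j) <
      distZ (fun j => (periods ω i : ℝ) * ω j)}.Nonempty := ⟨T, hT, h⟩
  exact ⟨(Nat.sInf_mem hne).1, Nat.sInf_le ⟨hT, h⟩⟩

theorem periods_succ_le_of_forall_exists {n : ℕ} {ω : Fin n → ℝ} {f : ℕ → ℝ}
    (h : ∀ p : ℕ, 1 ≤ p → ∃ T : ℕ, 1 ≤ T ∧ (T : ℝ) ≤ f p ∧
      distZ (fun j => (T : ℝ) * ω j) < distZ (fun j => (p : ℝ) * ω j))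
    (i : ℕ) : (periods ω (i + 1) : ℝ) ≤ f (periods ω i) := by
  have one_le : ∀ i, 1 ≤ periods ω i := by
    intro i
    induction i with
    | zero => exact le_rfl
    | succ i ih =>
      obtain ⟨T, hT, -, hd⟩ := h _ ih
      exact (periods_succ_le hT hd).1
  obtain ⟨T, hT, hTf, hd⟩ := h _ (one_le i)
  exact (Nat.cast_le.mpr (periods_succ_le hT hd).2).trans hTf

theorem exists_distZ_lt_of_le_distZ {n : ℕ} (hn : n ≠ 0) {ω : Fin n → ℝ} {τ C : ℝ}
    (hC : 0 < C) {p : ℕ} (hp : 1 ≤ p)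
    (hΩ : C * (p : ℝ) ^ (-(1 + τ) / n) ≤ distZ (fun j => (p : ℝ) * ω j)) :
    ∃ T : ℕ, 1 ≤ T ∧ (T : ℝ) ≤ C ^ (-(n : ℝ)) * (p : ℝ) ^ (1 + τ) ∧
      distZ (fun j => (T : ℝ) * ω j) < distZ (fun j => (p : ℝ) * ω j) := by
  have hp0 : (0 : ℝ) < p := by exact_mod_cast hp
  have hpos : 0 < C * (p : ℝ) ^ (-(1 + τ) / n) := by positivity
  refine exists_distZ_lt hn ω (hpos.trans_le hΩ) ((distZ_le_half _).trans (by norm_num)) ?_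
  calc (distZ fun j => (p : ℝ) * ω j)⁻¹ ^ n ≤ (C * (p : ℝ) ^ (-(1 + τ) / n))⁻¹ ^ n :=
        pow_le_pow_left₀ (inv_nonneg.mpr (distZ_nonneg _)) (inv_anti₀ hpos hΩ) n
    _ = C ^ (-(n : ℝ)) * (p : ℝ) ^ (1 + τ) := by
        rw [← Real.rpow_natCast, ← Real.rpow_neg_one, ← Real.rpow_mul hpos.le,
          Real.mul_rpow hC.le (by positivity), ← Real.rpow_mul hp0.le]
        congr 2 <;> field_simp

theorem stmt15_general {n : ℕ} (hn : 1 ≤ n) (τ : ℝ) (ω : Fin n → ℝ)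
    (C : ℝ) (hC : 0 < C)
    (hΩ : ∀ T : ℕ, 1 ≤ T →
      distZ (fun j => (T : ℝ) * ω j) ≥ C * (T : ℝ) ^ (-(1 + τ) / (n : ℝ))) :
    ¬ IsRationalVec ω ∧
      ∀ i : ℕ, (periods ω (i + 1) : ℝ) ≤
        C ^ (-(n : ℝ)) * (periods ω i : ℝ) ^ (1 + τ) := by
  refine ⟨fun hω => ?_, periods_succ_le_of_forall_exists fun p hp =>
    exists_distZ_lt_of_le_distZ (by omega) hC hp (hΩ p hp)⟩
  obtain ⟨T, hT, hzero⟩ := hω.exists_distZ_mul_eq_zero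
  have hT0 : (0 : ℝ) < T := by exact_mod_cast hT
  have hpos : 0 < C * (T : ℝ) ^ (-(1 + τ) / (n : ℝ)) := by positivity
  linarith [hΩ T hT]

/-- `Ω_n(τ) ⊆ Ω(τ)`, with the explicit constant `C^{-n}`. -/
theorem stmt15 {n : ℕ} (hn : 1 ≤ n) (τ : ℝ) (hτ : 0 ≤ τ) (ω : Fin n → ℝ)
    (C : ℝ) (hC : 0 < C)
    (hΩ : ∀ T : ℕ, 1 ≤ T →
      distZ (fun j => (T : ℝ) * ω j) ≥ C * (T : ℝ) ^ (-(1 + τ) / (n : ℝ))) :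
    ¬ IsRationalVec ω ∧
      ∀ i : ℕ, (periods ω (i + 1) : ℝ) ≤
        C ^ (-(n : ℝ)) * (periods ω i : ℝ) ^ (1 + τ) :=
  stmt15_general hn τ ω C hC hΩ
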